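/- Let f : A → B be a surjective homomorphism of abelian groups whose kernel K satisfies K ⊗_ℤ (ℚ/ℤ) = 0. Then f restricts to a surjection on torsion subgroups: every torsion element of B is the image of a torsion element of A. -/
import Mathlib

def QZ : Type := ℚ ⧸ AddSubgroup.zmultiples (1 : ℚ)

instance : AddCommGroup QZ :=
  inferInstanceAs (AddCommGroup (ℚ ⧸ AddSubgroup.zmultiples (1 : ℚ)))

open TensorProduct LinearMap in
lemma aux (K : Type) [AddCommGroup K]
    (hK : Subsingleton (TensorProduct ℤ K QZ)) (k : K) (n : ℕ) (hn : 0 < n) :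
    ∃ (d : K) (m : ℕ), 0 < m ∧ m • (k - n • d) = 0 := by
  haveI : Subsingleton (TensorProduct ℤ QZ K) :=
    (TensorProduct.comm ℤ QZ K).toEquiv.subsingleton
  set ι : ℤ →ₗ[ℤ] ℚ := Algebra.linearMap ℤ ℚ with hι
  set π : ℚ →ₗ[ℤ] QZ :=
    (QuotientAddGroup.mk' (AddSubgroup.zmultiples (1 : ℚ))).toIntLinearMap with hπ
  have hexact : Function.Exact ι π := by
    intro q
    constructor
    · intro h
      have h' : q ∈ AddSubgroup.zmultiples (1 : ℚ) :=
        (QuotientAddGroup.eq_zero_iff q).mp h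
      obtain ⟨z, hz⟩ := AddSubgroup.mem_zmultiples_iff.mp h'
      exact ⟨z, by simpa [hι, zsmul_eq_mul, mul_one] using hz⟩
    · rintro ⟨z, rfl⟩
      have h' : (ι z : ℚ) ∈ AddSubgroup.zmultiples (1 : ℚ) :=
        ⟨z, by simp [hι, zsmul_eq_mul, mul_one]⟩
      exact (QuotientAddGroup.eq_zero_iff _).mpr h'
  have hsurj : Function.Surjective π := fun x =>
    QuotientAddGroup.mk'_surjective _ x
  have hex2 : Function.Exact (rTensor K ι) (rTensor K π) :=
    rTensor_exact K hexact hsurj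
  have hrange : ∀ y : TensorProduct ℤ ℤ K, ∃ d : K,
      rTensor K ι y = (1 : ℚ) ⊗ₜ[ℤ] d := by
    intro y
    induction y using TensorProduct.induction_on with
    | zero => exact ⟨0, by simp⟩
    | tmul z x =>
        refine ⟨z • x, ?_⟩
        simp only [rTensor_tmul, hι, Algebra.linearMap_apply]
        rw [show (algebraMap ℤ ℚ) z = z • (1 : ℚ) by simp, smul_tmul]
    | add u v hu hv =>
        obtain ⟨d₁, h₁⟩ := hu
        obtain ⟨d₂, h₂⟩ := hv
        exact ⟨d₁ + d₂, by rw [map_add, h₁, h₂, tmul_add]⟩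
  have hnQ : (n : ℚ) ≠ 0 := Nat.cast_ne_zero.mpr hn.ne'
  obtain ⟨y, hy⟩ := (hex2 ((n : ℚ)⁻¹ ⊗ₜ[ℤ] k)).mp (Subsingleton.elim _ _)
  obtain ⟨d, hd⟩ := hrange y
  rw [hy] at hd
  have h1 : (TensorProduct.mk ℤ ℚ K 1) k = (TensorProduct.mk ℤ ℚ K 1) (n • d) := by
    rw [map_nsmul, TensorProduct.mk_apply, TensorProduct.mk_apply, ← hd, smul_tmul',
      nsmul_eq_mul, mul_inv_cancel₀ hnQ]
  have hloc : IsLocalizedModule (nonZeroDivisors ℤ) (TensorProduct.mk ℤ ℚ K 1) :=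
    (isLocalizedModule_iff_isBaseChange (nonZeroDivisors ℤ) ℚ _).mpr
      (TensorProduct.isBaseChange ℤ K ℚ)
  haveI := hloc
  have hzero : (TensorProduct.mk ℤ ℚ K 1) (k - n • d) = 0 := by
    rw [map_sub, h1, sub_self]
  obtain ⟨s, hs⟩ := (IsLocalizedModule.eq_zero_iff (nonZeroDivisors ℤ)
    (TensorProduct.mk ℤ ℚ K 1)).mp hzero
  have hsne : (s : ℤ) ≠ 0 := nonZeroDivisors.coe_ne_zero s
  refine ⟨d, (s : ℤ).natAbs, Int.natAbs_pos.mpr hsne, ?_⟩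
  have hs' : (s : ℤ) • (k - n • d) = 0 := hs
  have h2 : ((s : ℤ).natAbs : ℤ) • (k - n • d) = 0 := by
    rcases Int.natAbs_eq (s : ℤ) with h | h
    · rw [← h]; exact hs'
    · rw [show ((s : ℤ).natAbs : ℤ) = -(s : ℤ) by omega, neg_smul, hs', neg_zero]
  simpa using h2

/-- If `f : A → B` is a surjective homomorphism of abelian groups whose kernel `K` satisfies
`K ⊗_ℤ (ℚ/ℤ) = 0`, then every torsion element of `B` is the image of a torsion element of `A`. -/
theorem stmt4 (A B : Type) [AddCommGroup A] [AddCommGroup B] (f : A →+ B)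
    (hf : Function.Surjective f)
    (hK : Subsingleton (TensorProduct ℤ f.ker QZ)) :
    ∀ b : B, (∃ n : ℕ, 0 < n ∧ n • b = 0) →
      ∃ a : A, (∃ n : ℕ, 0 < n ∧ n • a = 0) ∧ f a = b := by
  rintro b ⟨n, hn, hnb⟩
  obtain ⟨a, rfl⟩ := hf b
  have hk : n • a ∈ f.ker := by
    rw [AddMonoidHom.mem_ker, map_nsmul, hnb]
  obtain ⟨d, m, hm, hmd⟩ := aux (↥f.ker) hK ⟨n • a, hk⟩ n hn
  have hmd' : m • (n • a - n • (d : A)) = 0 := by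
    have := congrArg (Subtype.val) hmd
    simpa [smul_sub, sub_smul] using this
  refine ⟨a - (d : A), ⟨m * n, Nat.mul_pos hm hn, ?_⟩, ?_⟩
  · rw [mul_smul, smul_sub]
    simpa [smul_sub] using hmd'
  · have hd0 : f (d : A) = 0 := AddMonoidHom.mem_ker.mp d.2
    simp [map_sub, hd0]
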